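/- Let C be a linear code over Z_p and let s be the number of distinct nonzero Hamming weights of its dual C^⊥. Then every coset of C contains a vector of Hamming weight at most s. -/

import Mathlib

/-- The dual of a linear code `C ⊆ R^n` under the standard inner product. -/
def dualCode {R : Type*} [CommRing R] {n : ℕ} (C : Submodule R (Fin n → R)) :
    Submodule R (Fin n → R) where
  carrier := {x | ∀ c ∈ C, ∑ j, x j * c j = 0}
  add_mem' := by
    intro a b ha hb c hc
    simp only [Pi.add_apply, add_mul, Finset.sum_add_distrib, ha c hc, hb c hc, add_zero]
  zero_mem' := by intro c hc; simp
  smul_mem' := by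
    intro r a ha c hc
    simp only [Pi.smul_apply, smul_eq_mul, mul_assoc, ← Finset.mul_sum, ha c hc, mul_zero]

/-!
Fix a nontrivial additive character `ψ` of the finite field `F`, put `q = |F|` and `D = C^⊥`. Character
orthogonality over `D` gives the MacWilliams-type identity
  `|D| • ∑_{x + z ∈ C} X ^ wt z = ∑_{c ∈ D} ψ (x ⬝ c) • K_{wt c}`,
`K_w = (1 - X) ^ w * (1 + (q - 1) X) ^ (n - w)`. Grouped by weight, the right side is a
combination of the `s + 1` polynomials `K_w`, `w ∈ {0} ∪ wt(D \ 0)`, in which `K_0` has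
coefficient `1`. If the whole coset had weight `> s`, the left side would be divisible by
`X ^ (s + 1)`. But the `K_w` are eigenvectors, with the distinct eigenvalues `-q w`, of the operator
`(1 - X)(1 + (q - 1) X) d/dX - n (q - 1)(1 - X)`, which lowers the order of vanishing at `0` by at
most one; subtracting one eigenvalue and inducting, no nonzero combination of `m` eigenvectors
that do not vanish at `0` is divisible by `X ^ m`.
-/

open Polynomial Finset

namespace Polynomial

variable {R : Type*} [CommRing R]

theorem eq_zero_of_X_pow_card_dvd_sum_smul [IsDomain R] (T : R[X] →ₗ[R] R[X])
    (hT : ∀ k (f : R[X]), X ^ (k + 1) ∣ f → X ^ k ∣ T f) {ι : Type*} [DecidableEq ι]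
    {q : ι → R[X]} {μ : ι → R} {W : Finset ι} (hμ : Set.InjOn μ W)
    (hTq : ∀ i ∈ W, T (q i) = μ i • q i) (hq : ∀ i ∈ W, (q i).coeff 0 ≠ 0) {β : ι → R}
    (hdvd : X ^ #W ∣ ∑ i ∈ W, β i • q i) : ∀ i ∈ W, β i = 0 := by
  induction W using Finset.induction_on generalizing β with
  | empty => simp
  | insert a W ha ih =>
    rw [Finset.card_insert_of_notMem ha, Finset.sum_insert ha] at hdvd
    set T' : R[X] →ₗ[R] R[X] := T - μ a • LinearMap.id
    have hT' : ∀ k (f : R[X]), X ^ (k + 1) ∣ f → X ^ k ∣ T' f := fun k f hf => by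
      simpa only [T', LinearMap.sub_apply, LinearMap.smul_apply, LinearMap.id_apply] using
        dvd_sub (hT k f hf) (dvd_smul_of_dvd (μ a) ((pow_dvd_pow X k.le_succ).trans hf))
    have hrest : ∀ i ∈ W, β i = 0 := by
      have hshift : T' (β a • q a + ∑ i ∈ W, β i • q i)
          = ∑ i ∈ W, (β i * (μ i - μ a)) • q i := by
        have hT'q : ∀ i ∈ insert a W, T' (q i) = (μ i - μ a) • q i := fun i hi => by
          simp [T', hTq i hi, sub_smul]
        rw [map_add, map_smul, hT'q a (mem_insert_self a W), sub_self, zero_smul, smul_zero,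
          zero_add, map_sum]
        refine sum_congr rfl fun i hi => ?_
        rw [map_smul, hT'q i (mem_insert_of_mem hi), smul_smul]
      intro i hi
      have hi' := ih (hμ.mono (coe_subset.mpr (subset_insert a W)))
        (fun j hj => hTq j (mem_insert_of_mem hj)) (fun j hj => hq j (mem_insert_of_mem hj))
        (hshift ▸ hT' _ _ hdvd) i hi
      refine (mul_eq_zero.mp hi').resolve_right (sub_ne_zero.mpr fun h => ?_)
      exact ha (hμ (mem_insert_of_mem hi) (mem_insert_self a W) h ▸ hi)
    intro i hi
    rcases mem_insert.mp hi with rfl | hi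
    · rw [sum_eq_zero fun j hj => by rw [hrest j hj, zero_smul], add_zero] at hdvd
      have hcoeff := X_dvd_iff.mp ((dvd_pow_self X (Nat.succ_ne_zero _)).trans hdvd)
      rw [coeff_smul, smul_eq_mul] at hcoeff
      exact (mul_eq_zero.mp hcoeff).resolve_right (hq i (mem_insert_self i W))
    · exact hrest i hi

theorem mul_derivative_pow (f : R[X]) (k : ℕ) :
    f * derivative (f ^ k) = C (k : R) * derivative f * f ^ k := by
  cases k with
  | zero => simp
  | succ k => rw [derivative_pow_succ, pow_succ, Nat.cast_succ]; ring

-- `∑ k, K_k(w) X^k`, the generating function of the Krawtchouk polynomials of length `n` over an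
-- alphabet of size `q`.
noncomputable def krawtchoukGen (q n w : ℕ) : R[X] :=
  (1 - X) ^ w * (1 + C ((q : R) - 1) * X) ^ (n - w)

theorem coeff_zero_krawtchoukGen (q n w : ℕ) : (krawtchoukGen q n w : R[X]).coeff 0 = 1 := by
  simp [krawtchoukGen, coeff_zero_eq_eval_zero]

noncomputable def krawtchoukOp (q n : ℕ) : R[X] →ₗ[R] R[X] :=
  LinearMap.mulLeft R ((1 - X) * (1 + C ((q : R) - 1) * X)) ∘ₗ derivative
    - LinearMap.mulLeft R (C ((n : R) * ((q : R) - 1)) * (1 - X))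

theorem X_pow_dvd_krawtchoukOp {q n k : ℕ} {f : R[X]} (hf : X ^ (k + 1) ∣ f) :
    X ^ k ∣ krawtchoukOp q n f :=
  dvd_sub (dvd_mul_of_dvd_right (by simpa using pow_sub_one_dvd_derivative_of_pow_dvd hf) _)
    (dvd_mul_of_dvd_right ((pow_dvd_pow X k.le_succ).trans hf) _)

theorem krawtchoukOp_krawtchoukGen {q n w : ℕ} (hw : w ≤ n) :
    krawtchoukOp q n (krawtchoukGen q n w : R[X]) = (-(q * w : R)) • krawtchoukGen q n w := by
  obtain ⟨m, rfl⟩ := Nat.exists_eq_add_of_le hw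
  simp only [krawtchoukOp, krawtchoukGen, LinearMap.sub_apply, LinearMap.comp_apply,
    LinearMap.mulLeft_apply, Nat.add_sub_cancel_left, derivative_mul, smul_eq_C_mul, map_mul,
    map_add, map_sub, map_neg, map_natCast, map_one, Nat.cast_add]
  set A : R[X] := 1 - X
  set B : R[X] := 1 + ((q : R[X]) - 1) * X
  have hA := mul_derivative_pow A w
  have hB := mul_derivative_pow B m
  have hdA : derivative A = -1 := by simp [A]
  have hdB : derivative B = (q : R[X]) - 1 := by simp [B]
  simp only [hdA, hdB, map_natCast] at hA hB
  linear_combination (B * B ^ m) * hA + (A * A ^ w) * hB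

theorem eq_zero_of_X_pow_card_dvd_sum_smul_krawtchoukGen [IsDomain R] [CharZero R] {q n : ℕ}
    (hq : q ≠ 0) {W : Finset ℕ} (hW : ∀ w ∈ W, w ≤ n) {β : ℕ → R}
    (hdvd : (X : R[X]) ^ #W ∣ ∑ w ∈ W, β w • krawtchoukGen q n w) : ∀ w ∈ W, β w = 0 :=
  eq_zero_of_X_pow_card_dvd_sum_smul (krawtchoukOp q n) (fun _ _ => X_pow_dvd_krawtchoukOp)
    (fun v _ w _ h => by simpa [hq] using h) (fun w hw => krawtchoukOp_krawtchoukGen (hW w hw))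
    (fun w _ => by simp [coeff_zero_krawtchoukGen]) hdvd

end Polynomial

theorem AddChar.map_sum_eq_prod {A M ι : Type*} [AddCommMonoid A] [CommMonoid M]
    (ψ : AddChar A M) (s : Finset ι) (f : ι → A) : ψ (∑ i ∈ s, f i) = ∏ i ∈ s, ψ (f i) := by
  classical
  induction s using Finset.induction_on with
  | empty => simp
  | insert a s ha ih => rw [sum_insert ha, prod_insert ha, AddChar.map_add_eq_mul, ih]

theorem mem_dualCode_iff {R : Type*} [CommRing R] {n : ℕ} {C : Submodule R (Fin n → R)}
    {x : Fin n → R} : x ∈ dualCode C ↔ ∀ c ∈ C, x ⬝ᵥ c = 0 := Iff.rfl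

theorem dualCode_dualCode {K : Type*} [Field K] {n : ℕ} (C : Submodule K (Fin n → K)) :
    dualCode (dualCode C) = C := by
  let B := Matrix.toBilin' (1 : Matrix (Fin n) (Fin n) K)
  have hB : ∀ W, dualCode W = B.orthogonal W := fun W => by
    ext x
    simp [mem_dualCode_iff, LinearMap.BilinForm.mem_orthogonal_iff, B,
      Matrix.toBilin'_apply', dotProduct_comm x]
  have hnd : B.Nondegenerate := (Matrix.nondegenerate_of_det_ne_zero (by simp)).toBilin'
  have hrefl : B.IsRefl := (Matrix.isSymm_toBilin'_iff_isSymm.mpr Matrix.isSymm_one).isRefl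
  rw [hB, hB, LinearMap.BilinForm.orthogonal_orthogonal hnd hrefl]

theorem card_image_hammingNorm {K : Type*} [Ring K] [DecidableEq K] {n : ℕ}
    (D : Submodule K (Fin n → K)) [Fintype D] :
    #(univ.image fun c : D => hammingNorm (c : Fin n → K))
      = Nat.card {w : ℕ | w ≠ 0 ∧ ∃ c ∈ D, hammingNorm c = w} + 1 := by
  set W := univ.image fun c : D => hammingNorm (c : Fin n → K)
  have h0 : 0 ∈ W := mem_image.mpr ⟨0, mem_univ _, hammingNorm_zero⟩
  have hset : {w : ℕ | w ≠ 0 ∧ ∃ c ∈ D, hammingNorm c = w} = ↑(W.erase 0) := by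
    ext w
    simp [W, and_comm]
  rw [hset, Nat.card_coe_set_eq, Set.ncard_coe_finset, card_erase_add_one h0]

section Characters

variable {F R : Type*} [Field F] [CommRing R] [IsDomain R] {ψ : AddChar F R} {n : ℕ}

theorem sum_addChar_dotProduct_eq_ite (hψ : ψ ≠ 1) (D : Submodule F (Fin n → F)) [Fintype D]
    (u : Fin n → F) [Decidable (u ∈ dualCode D)] :
    ∑ c : D, ψ (u ⬝ᵥ c) = if u ∈ dualCode D then (Fintype.card D : R) else 0 := by
  classical
  let φ : AddChar D R := ψ.compAddMonoidHom
    (AddMonoidHom.mk' (fun c : D => u ⬝ᵥ (c : Fin n → F)) fun a b => dotProduct_add _ _ _)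
  have hφ : φ = 0 ↔ u ∈ dualCode D := by
    refine AddChar.eq_zero_iff.trans
      ⟨fun h => mem_dualCode_iff.mpr fun c hc => ?_, fun h c => ?_⟩
    · by_contra ht
      refine hψ (AddChar.eq_one_iff.mpr fun a => ?_)
      simpa [φ, dotProduct_smul, div_mul_cancel₀ a ht] using
        h ⟨(a / u ⬝ᵥ c) • c, D.smul_mem _ hc⟩
    · simp [φ, mem_dualCode_iff.mp h c c.2]
  exact (AddChar.sum_eq_ite φ).trans (if_congr hφ rfl rfl)

variable [Fintype F] [DecidableEq F]

theorem sum_addChar_mul_smul_ite_X (hψ : ψ ≠ 1) (t : F) :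
    ∑ a : F, ψ (a * t) • (if a = 0 then 1 else X : R[X])
      = if t = 0 then 1 + C ((Fintype.card F : R) - 1) * X else 1 - X := by
  have hsplit : ∀ a : F, (if a = 0 then 1 else X : R[X]) = X + if a = 0 then 1 - X else 0 :=
    fun a => by split_ifs <;> ring
  simp only [hsplit, smul_add, smul_ite, smul_zero, sum_add_distrib, sum_ite_eq', mem_univ,
    if_true, zero_mul, AddChar.map_zero_eq_one, one_smul, ← sum_smul,
    AddChar.sum_mulShift t (AddChar.IsPrimitive.of_ne_one hψ)]
  split_ifs
  · simp only [smul_eq_C_mul, map_natCast, map_sub, map_one]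
    ring
  · simp

theorem sum_addChar_dotProduct_smul_X_pow_hammingNorm (hψ : ψ ≠ 1) (c : Fin n → F) :
    ∑ z : Fin n → F, ψ (c ⬝ᵥ z) • (X : R[X]) ^ hammingNorm z
      = krawtchoukGen (Fintype.card F) n (hammingNorm c) := by
  have hprod : ∀ z : Fin n → F, ψ (c ⬝ᵥ z) • (X : R[X]) ^ hammingNorm z
      = ∏ j, ψ (z j * c j) • (if z j = 0 then 1 else X : R[X]) := by
    intro z
    simp only [smul_eq_C_mul, prod_mul_distrib, ← map_prod, ← AddChar.map_sum_eq_prod, prod_ite,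
      prod_const, one_pow, one_mul, dotProduct_comm c z]
    rfl
  rw [sum_congr rfl fun z _ => hprod z,
    ← Fintype.prod_sum fun j (a : F) => ψ (a * c j) • (if a = 0 then 1 else X : R[X])]
  simp only [sum_addChar_mul_smul_ite_X hψ, prod_ite, prod_const]
  have hzero : #{j | c j = 0} = n - hammingNorm c := by
    have hcard := card_filter_add_card_filter_not (s := univ) (fun j => c j = 0)
    rw [card_univ, Fintype.card_fin] at hcard
    exact Nat.eq_sub_of_add_eq hcard
  rw [hzero, mul_comm]
  rfl

theorem sum_addChar_dotProduct_smul_krawtchoukGen (hψ : ψ ≠ 1) (D : Submodule F (Fin n → F))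
    [Fintype D] [DecidablePred (· ∈ dualCode D)] (x : Fin n → F) :
    ∑ c : D, ψ (x ⬝ᵥ c) • (krawtchoukGen (Fintype.card F) n (hammingNorm (c : Fin n → F)) : R[X])
      = Fintype.card D • ∑ z with x + z ∈ dualCode D, (X : R[X]) ^ hammingNorm z := by
  simp_rw [← sum_addChar_dotProduct_smul_X_pow_hammingNorm hψ, smul_sum, smul_smul,
    ← AddChar.map_add_eq_mul]
  rw [sum_comm, sum_filter]
  refine sum_congr rfl fun z _ => ?_
  have hshift : ∀ c : D, x ⬝ᵥ c + (c : Fin n → F) ⬝ᵥ z = (x + z) ⬝ᵥ c := fun c => by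
    rw [add_dotProduct, dotProduct_comm _ z]
  rw [← sum_smul, sum_congr rfl fun c _ => congrArg ψ (hshift c),
    sum_addChar_dotProduct_eq_ite hψ]
  split_ifs <;> simp [Nat.cast_smul_eq_nsmul]

theorem exists_mem_hammingNorm_add_le_of_addChar [CharZero R] (hψ : ψ ≠ 1)
    (C : Submodule F (Fin n → F)) (x : Fin n → F) :
    ∃ c ∈ C, hammingNorm (x + c)
      ≤ Nat.card {w : ℕ | w ≠ 0 ∧ ∃ c ∈ dualCode C, hammingNorm c = w} := by
  classical
  by_contra! hfar
  set D := dualCode C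
  set W := univ.image fun c : D => hammingNorm (c : Fin n → F)
  set β : ℕ → R := fun w => ∑ c ∈ univ.filter fun c : D => hammingNorm (c : Fin n → F) = w,
    ψ (x ⬝ᵥ c)
  have hgroup : ∑ w ∈ W, β w • krawtchoukGen (R := R) (Fintype.card F) n w
      = ∑ c : D, ψ (x ⬝ᵥ c) • krawtchoukGen (Fintype.card F) n (hammingNorm (c : Fin n → F)) :=
    sum_image' _ fun c _ => by
      simp only [β, sum_smul]
      exact sum_congr rfl fun c' hc' => by rw [(mem_filter.mp hc').2]
  have hdvd : (X : R[X]) ^ #W ∣ ∑ w ∈ W, β w • krawtchoukGen (Fintype.card F) n w := by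
    rw [hgroup, sum_addChar_dotProduct_smul_krawtchoukGen hψ, card_image_hammingNorm]
    refine dvd_smul_of_dvd _ (dvd_sum fun z hz => pow_dvd_pow X ?_)
    have hz : x + z ∈ C := dualCode_dualCode C ▸ (mem_filter.mp hz).2
    simpa [hammingNorm] using hfar _ (neg_mem hz)
  have hβ0 : β 0 = 1 := by
    simp [β, filter_eq']
  have hW : ∀ w ∈ W, w ≤ n := fun w hw => by
    obtain ⟨c, _, rfl⟩ := mem_image.mp hw
    exact hammingNorm_le_card_fintype.trans_eq (Fintype.card_fin n)
  have hβ := eq_zero_of_X_pow_card_dvd_sum_smul_krawtchoukGen Fintype.card_ne_zero hW hdvd 0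
    (mem_image.mpr ⟨0, mem_univ _, hammingNorm_zero⟩)
  exact one_ne_zero (hβ0 ▸ hβ)

end Characters

theorem exists_mem_hammingNorm_add_le {F : Type*} [Field F] [Fintype F] [DecidableEq F] {n : ℕ}
    (C : Submodule F (Fin n → F)) (x : Fin n → F) :
    ∃ c ∈ C, hammingNorm (x + c)
      ≤ Nat.card {w : ℕ | w ≠ 0 ∧ ∃ c ∈ dualCode C, hammingNorm c = w} := by
  have hchar : ringChar ℚ ≠ ringChar F := by
    rw [ringChar.eq_zero]
    exact (CharP.char_is_prime F _).ne_zero.symm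
  let ψ := AddChar.FiniteField.primitiveChar F ℚ hchar
  have hψ : ψ.char ≠ 1 := by simpa using ψ.prim one_ne_zero
  exact exists_mem_hammingNorm_add_le_of_addChar hψ C x

/-- Delsarte's covering radius bound: every coset of a linear code `C ⊆ Z_p^n`
contains a vector of Hamming weight at most `s`, the number of distinct nonzero weights of the
dual code. -/
theorem stmt5 (p n : ℕ) (hp : p.Prime)
    (C : Submodule (ZMod p) (Fin n → ZMod p))
    (s : ℕ)
    (hs : s = Nat.card {w : ℕ | w ≠ 0 ∧ ∃ c ∈ dualCode C, hammingNorm c = w}) :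
    ∀ x : Fin n → ZMod p, ∃ c ∈ C, hammingNorm (x + c) ≤ s := by
  have : Fact p.Prime := ⟨hp⟩
  exact hs ▸ exists_mem_hammingNorm_add_le C
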